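/- There exist ε₀ ∈ (0,1) and C > 0 such that for every ε ∈ (0,ε₀) and every x with c_ε/2 ≤ x < c_ε: |D(x) − L_ε √(c_ε − x)| ≤ C L_ε (c_ε − x)^{3/2} / c_ε, where L_ε = √(6 ε⁴ c_ε (c_ε² + d_ε²)). An analogous estimate holds near −c_ε: for −c_ε < x ≤ −c_ε/2, |D(x) − L_ε √(x + c_ε)| ≤ C L_ε (x + c_ε)^{3/2} / c_ε. -/
import Mathlib


noncomputable section
open Set

namespace Stmt18

/-- c_ε² = (1 − 2ε² + 2√(1 − ε² + ε⁴)) / (3ε²) -/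
def cSq (ε : ℝ) : ℝ := (1 - 2*ε^2 + 2*Real.sqrt (1 - ε^2 + ε^4)) / (3*ε^2)

/-- d_ε² = (−1 + 2ε² + 2√(1 − ε² + ε⁴)) / (3ε²) -/
def dSq (ε : ℝ) : ℝ := (-1 + 2*ε^2 + 2*Real.sqrt (1 - ε^2 + ε^4)) / (3*ε^2)

/-- c_ε, the positive square root of c_ε² -/
def ceps (ε : ℝ) : ℝ := Real.sqrt (cSq ε)

/-- D(x) = √(1 + 2ε²x² − 4ε⁴x² − 3ε⁴x⁴) (real nonnegative square root) -/
def Dsmall (ε x : ℝ) : ℝ := Real.sqrt (1 + 2*ε^2*x^2 - 4*ε^4*x^2 - 3*ε^4*x^4)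

/-- L_ε = √(6 ε⁴ c_ε (c_ε² + d_ε²)) -/
def Leps (ε : ℝ) : ℝ := Real.sqrt (6 * ε^4 * ceps ε * (cSq ε + dSq ε))

lemma sqrt_sub_sqrt_mul_le (a b : ℝ) (ha : 0 ≤ a) (hb : 0 ≤ b) :
    |Real.sqrt a - Real.sqrt b| * Real.sqrt b ≤ |a - b| := by
  have hsa := Real.sqrt_nonneg a
  have hsb := Real.sqrt_nonneg b
  have h1 : Real.sqrt a ^ 2 = a := Real.sq_sqrt ha
  have h2 : Real.sqrt b ^ 2 = b := Real.sq_sqrt hb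
  rcases le_total (Real.sqrt b) (Real.sqrt a) with h | h
  · rw [abs_of_nonneg (by linarith), abs_of_nonneg (by nlinarith)]
    nlinarith
  · rw [abs_of_nonpos (by linarith), abs_of_nonpos (by nlinarith)]
    nlinarith

lemma key (ε : ℝ) (hε0 : 0 < ε) (hε1 : ε < 1) (x : ℝ)
    (hx1 : ceps ε / 2 ≤ x) (hx2 : x < ceps ε) :
    |Dsmall ε x - Leps ε * Real.sqrt (ceps ε - x)| ≤
      3 * Leps ε * (ceps ε - x) ^ ((3:ℝ)/2) / ceps ε := by
  set s := Real.sqrt (1 - ε^2 + ε^4) with hs_def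
  have hΔ : (0:ℝ) < 1 - ε^2 + ε^4 := by nlinarith
  have hs2 : s^2 = 1 - ε^2 + ε^4 := Real.sq_sqrt hΔ.le
  have hs0 : 0 ≤ s := Real.sqrt_nonneg _
  have hε2 : (0:ℝ) < ε^2 := by positivity
  have hcSq : 0 < cSq ε := by
    unfold cSq
    have : 0 < 1 - 2*ε^2 + 2*s := by nlinarith
    positivity
  have hdSq : 0 < dSq ε := by
    unfold dSq
    have : 0 < -1 + 2*ε^2 + 2*s := by nlinarith
    positivity
  have hc : 0 < ceps ε := Real.sqrt_pos.mpr hcSq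
  have hc2 : (ceps ε)^2 = cSq ε := Real.sq_sqrt hcSq.le
  set c := ceps ε
  -- product and difference identities
  have h1 : 3*ε^4 * (cSq ε * dSq ε) = 1 := by
    unfold cSq dSq
    field_simp
    nlinarith [hs2]
  have h2 : 3*ε^4*(cSq ε - dSq ε) = 2*ε^2 - 4*ε^4 := by
    unfold cSq dSq
    field_simp
    ring
  have hid : ∀ y : ℝ, 1 + 2*ε^2*y^2 - 4*ε^4*y^2 - 3*ε^4*y^4
      = (c - y) * (3*ε^4*(c+y)*(y^2 + dSq ε)) := by
    intro y
    linear_combination -h1 - y^2 * h2 - 3*ε^4*(y^2 + dSq ε) * hc2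
  set u := c - x with hu_def
  have hu : 0 < u := by simp [hu_def]; linarith
  have hx0 : 0 ≤ x := by linarith
  set g := 3*ε^4*(c+x)*(x^2 + dSq ε) with hg_def
  have hg0 : 0 ≤ g := by
    apply mul_nonneg (mul_nonneg (by positivity) (by linarith))
    nlinarith [sq_nonneg x]
  have hD : Dsmall ε x = Real.sqrt u * Real.sqrt g := by
    unfold Dsmall
    rw [hid x, Real.sqrt_mul hu.le]
  set M := 6*ε^4*c*(cSq ε + dSq ε) with hM_def
  have hM : 0 < M := by
    apply mul_pos (mul_pos (by positivity) hc); linarith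
  have hLM : Leps ε = Real.sqrt M := rfl
  have hL : 0 < Leps ε := by rw [hLM]; exact Real.sqrt_pos.mpr hM
  have hsM : Real.sqrt M ^ 2 = M := Real.sq_sqrt hM.le
  clear_value s c u g M
  -- bound |g - M|
  have heq : g - M = -(3*ε^4*u*(x^2+2*c*x+2*c^2+dSq ε)) := by
    simp only [hg_def, hM_def, hu_def]
    linear_combination 6*ε^4*c*hc2
  have hgM : |g - M| ≤ 5/(2*c) * M * u := by
    have hfac : 0 ≤ 3*ε^4*u*(x^2+2*c*x+2*c^2+dSq ε) := by
      apply mul_nonneg (mul_nonneg (by positivity) hu.le)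
      nlinarith [sq_nonneg x]
    rw [heq, abs_neg, abs_of_nonneg hfac]
    have hb1 : x^2+2*c*x+2*c^2+dSq ε ≤ 5*(c^2 + dSq ε) := by nlinarith
    have h5 : 5/(2*c) * M * u = 3*ε^4*u*(5*(c^2+dSq ε)) := by
      rw [hM_def, ← hc2]; field_simp; ring
    rw [h5]
    exact mul_le_mul_of_nonneg_left hb1 (by positivity)
  -- bound |√g - √M|
  have hsMpos : 0 < Real.sqrt M := Real.sqrt_pos.mpr hM
  have hb : |Real.sqrt g - Real.sqrt M| ≤ 5/(2*c) * Real.sqrt M * u := by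
    have hkb := sqrt_sub_sqrt_mul_le g M hg0 hM.le
    have h6 : |Real.sqrt g - Real.sqrt M| ≤ (5/(2*c) * M * u) / Real.sqrt M :=
      (le_div_iff₀ hsMpos).mpr (hkb.trans hgM)
    have h7 : (5/(2*c) * M * u) / Real.sqrt M = 5/(2*c) * Real.sqrt M * u := by
      rw [div_eq_iff hsMpos.ne']
      linear_combination -(5/(2*c)*u) * hsM
    rwa [h7] at h6
  -- conclude
  have hrw : Dsmall ε x - Leps ε * Real.sqrt u
      = Real.sqrt u * (Real.sqrt g - Real.sqrt M) := by
    rw [hD, hLM]; ring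
  have hu32 : u ^ ((3:ℝ)/2) = u * Real.sqrt u := by
    rw [show ((3:ℝ)/2) = (1:ℝ) + 1/2 by norm_num, Real.rpow_add hu, Real.rpow_one,
      Real.sqrt_eq_rpow]
  rw [hrw, abs_mul, abs_of_nonneg (Real.sqrt_nonneg u)]
  have hstep : Real.sqrt u * |Real.sqrt g - Real.sqrt M|
      ≤ Real.sqrt u * (5/(2*c) * Real.sqrt M * u) :=
    mul_le_mul_of_nonneg_left hb (Real.sqrt_nonneg u)
  refine hstep.trans ?_
  rw [hu32, hLM]
  have hEq : Real.sqrt u * (5/(2*c) * Real.sqrt M * u)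
      = (5/2) * (Real.sqrt M * (u * Real.sqrt u)) / c := by
    ring
  have hEq2 : 3 * Real.sqrt M * (u * Real.sqrt u) / c
      = 3 * (Real.sqrt M * (u * Real.sqrt u)) / c := by ring
  rw [hEq, hEq2]
  have hA : 0 ≤ Real.sqrt M * (u * Real.sqrt u) :=
    mul_nonneg (Real.sqrt_nonneg _) (mul_nonneg hu.le (Real.sqrt_nonneg _))
  gcongr
  norm_num

theorem D_expansion_near_root :
    ∃ ε₀ ∈ Ioo (0:ℝ) 1, ∃ C > (0:ℝ), ∀ ε ∈ Ioo (0:ℝ) ε₀,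
      (∀ x : ℝ, ceps ε / 2 ≤ x → x < ceps ε →
        |Dsmall ε x - Leps ε * Real.sqrt (ceps ε - x)| ≤
          C * Leps ε * (ceps ε - x) ^ ((3:ℝ)/2) / ceps ε) ∧
      (∀ x : ℝ, -ceps ε < x → x ≤ -(ceps ε) / 2 →
        |Dsmall ε x - Leps ε * Real.sqrt (x + ceps ε)| ≤
          C * Leps ε * (x + ceps ε) ^ ((3:ℝ)/2) / ceps ε) := by
  refine ⟨1/2, ⟨by norm_num, by norm_num⟩, 3, by norm_num, ?_⟩
  intro ε hε
  have hε1 : ε < 1 := by linarith [hε.2]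
  constructor
  · intro x h1 h2
    exact key ε hε.1 hε1 x h1 h2
  · intro x h1 h2
    have hd : Dsmall ε (-x) = Dsmall ε x := by
      unfold Dsmall; congr 1; ring
    have hk := key ε hε.1 hε1 (-x) (by linarith) (by linarith)
    have he : ceps ε - -x = x + ceps ε := by ring
    rw [hd, he] at hk
    exact hk

end Stmt18
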